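/- The quantity ω(g,h) = (1/(2πi))(Log j(g, h·z) + Log j(h, z) − Log j(gh, z)) is independent of the choice of z ∈ ℍ. -/

import Mathlib

open Matrix UpperHalfPlane Complex

abbrev SL2R := Matrix.SpecialLinearGroup (Fin 2) ℝ

/-- The automorphy factor `j(g,z) = cz + d`. -/
noncomputable def jFac (g : SL2R) (z : ℂ) : ℂ :=
  (g.1 1 0 : ℝ) * z + (g.1 1 1 : ℝ)

/-- Petersson's 2-cocycle
`ω(g,h) = (1/(2πi))(Log j(g, h·z) + Log j(h,z) − Log j(gh,z))`. -/
noncomputable def omegaC (g h : SL2R) (z : ℍ) : ℂ :=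
  (1 / (2 * Real.pi * Complex.I)) *
    (Complex.log (jFac g ((h • z : ℍ) : ℂ)) + Complex.log (jFac h (z : ℂ))
      - Complex.log (jFac (g * h) (z : ℂ)))

/-!
The cocycle relation `j(gh, z) = j(g, h·z) j(h, z)` makes `exp (2πi ω(g,h)(z)) = 1`, so
`2πi ω(g,h)` takes values in the discrete set `2πiℤ`. It is continuous in `z`, since each
`z ↦ Log j(g, z)` is: either `c = 0` and `j(g, ·)` is constant, or `Im j(g, z) = c Im z ≠ 0`
keeps `j(g, z)` off the branch cut. A continuous map from the connected `ℍ` to a discrete set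
is constant.
-/

theorem PreconnectedSpace.constant_of_exp_eq_one {X : Type*} [TopologicalSpace X]
    [PreconnectedSpace X] {f : X → ℂ} (hf : Continuous f) (hexp : ∀ x, exp (f x) = 1) (x y : X) :
    f x = f y :=
  isPreconnected_univ.constant_of_mapsTo
    (isDiscrete_iff_discreteTopology.2 <|
      NormedSpace.discreteTopology_zmultiples (2 * Real.pi * Complex.I))
    hf.continuousOn (fun x _ => by
      obtain ⟨n, hn⟩ := exp_eq_one_iff.1 (hexp x)
      exact AddSubgroup.mem_zmultiples_iff.2 ⟨n, by rw [hn, zsmul_eq_mul]⟩)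
    trivial trivial

lemma jFac_eq_denom (g : SL2R) (z : ℂ) : jFac g z = denom (g : GL (Fin 2) ℝ) z := rfl

lemma jFac_ne_zero (g : SL2R) (z : ℍ) : jFac g z ≠ 0 :=
  denom_ne_zero (g : GL (Fin 2) ℝ) z

lemma jFac_mul (g h : SL2R) (z : ℍ) :
    jFac (g * h) z = jFac g ((h • z : ℍ) : ℂ) * jFac h z := by
  rw [coe_specialLinearGroup_apply]
  simpa [jFac_eq_denom, num, denom] using denom_cocycle (g : GL (Fin 2) ℝ) h z.im_ne_zero

lemma continuous_log_jFac (g : SL2R) : Continuous fun z : ℍ => log (jFac g z) := by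
  by_cases hc : g.1 1 0 = 0
  · simpa only [jFac, hc, ofReal_zero, zero_mul, zero_add] using continuous_const
  · refine continuous_iff_continuousAt.2 fun z => (continuousAt_clog ?_).comp
      (by unfold jFac; fun_prop)
    exact mem_slitPlane_iff.2 <| .inr <| by simpa [jFac] using And.intro hc z.im_ne_zero

lemma exp_log_jFac_add_log_jFac_sub_log_jFac (g h : SL2R) (z : ℍ) :
    exp (log (jFac g ((h • z : ℍ) : ℂ)) + log (jFac h z) - log (jFac (g * h) z)) = 1 := by
  rw [exp_sub, exp_add, exp_log (jFac_ne_zero g _), exp_log (jFac_ne_zero h z),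
    exp_log (jFac_ne_zero (g * h) z), jFac_mul,
    div_self (mul_ne_zero (jFac_ne_zero g _) (jFac_ne_zero h z))]

/-- `ω(g,h)` is independent of the choice of `z ∈ ℍ`. -/
theorem omegaC_indep (g h : SL2R) (z w : ℍ) : omegaC g h z = omegaC g h w := by
  have hcont : Continuous fun z : ℍ =>
      log (jFac g ((h • z : ℍ) : ℂ)) + log (jFac h z) - log (jFac (g * h) z) :=
    ((continuous_log_jFac g).comp (continuous_const_smul h)).add (continuous_log_jFac h) |>.sub
      (continuous_log_jFac (g * h))
  unfold omegaC
  rw [PreconnectedSpace.constant_of_exp_eq_one hcont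
    (exp_log_jFac_add_log_jFac_sub_log_jFac g h) z w]
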